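/- arXiv:2601.13643 — 5 statements merged into one kernel-verified Lean document; each statement's English description precedes it below -/
import Mathlib

section
/- Let M and M' be ℚ-vector spaces, ν : M → ℚ a ℚ-linear functional, φ : M → M' a ℚ-linear map, and q ≥ 1. Let M₀ ⊆ M and M₀' ⊆ M' be ℚ-linear subspaces such that for every f ∈ M₀ with ν(f) = 0 one has φ(f) ∈ M₀'. Then Res_{ν,φ} maps the image of the canonical map ⋀^q M₀ → ⋀^q M into the image of the canonical map ⋀^{q−1} M₀' → ⋀^{q−1} M'. In other words, for every ω in the subspace of ⋀^q M spanned by wedges f₁ ∧ ⋯ ∧ f_q with all f_i ∈ M₀, the element Res_{ν,φ}(ω) lies in the subspace of ⋀^{q−1} M' spanned by wedges of elements of M₀'. -/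
/-!
Since `ν` is a functional, among vectors `f₀, …, f_n ∈ M₀` all but one can be moved into
`ker ν` by subtracting multiples of a vector `f_{i₀}` with `ν f_{i₀} ≠ 0`, which does not change
their wedge. In the defining sum of `Res_{ν,φ}` only the `i₀`-th term survives, and it is a
multiple of the wedge of the `φ (f_j)`, `j ≠ i₀`, all of which lie in `M₀'`.
-/

open ExteriorAlgebra

/-- The wedge `f 0 ∧ ⋯ ∧ f (q-1)` as an element of the `q`-th exterior power
of a `ℚ`-vector space. -/
noncomputable def wedge {M : Type*} [AddCommGroup M] [Module ℚ M] (q : ℕ) (f : Fin q → M) :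
    ⋀[ℚ]^q M :=
  ⟨ExteriorAlgebra.ιMulti ℚ q f, ExteriorAlgebra.ιMulti_range ℚ q ⟨f, rfl⟩⟩

/-- `R : ⋀^{n+1} M → ⋀^n M'` is the residue map `Res_{ν,φ}` iff it takes the defining
values on wedges. -/
def IsResMap {M M' : Type*} [AddCommGroup M] [Module ℚ M] [AddCommGroup M'] [Module ℚ M']
    (n : ℕ) (ν : M →ₗ[ℚ] ℚ) (φ : M →ₗ[ℚ] M')
    (R : (⋀[ℚ]^(n + 1) M) →ₗ[ℚ] (⋀[ℚ]^n M')) : Prop :=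
  ∀ f : Fin (n + 1) → M,
    R (wedge (n + 1) f) =
      ∑ i : Fin (n + 1), ((-1 : ℚ) ^ (i : ℕ) * ν (f i)) •
        wedge n (fun j => φ (f (i.succAbove j)))

namespace AlternatingMap

variable {R M N ι : Type*} [Semiring R] [AddCommMonoid M] [Module R M] [AddCommMonoid N]
  [Module R N] [DecidableEq ι] (g : M [⋀^ι]→ₗ[R] N)

theorem map_update_add_smul_self (v : ι → M) {i j : ι} (hij : i ≠ j) (c : R) :
    g (Function.update v j (v j + c • v i)) = g v := by
  rw [g.map_update_add, g.map_update_smul, g.map_update_self _ hij.symm, smul_zero, add_zero,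
    Function.update_eq_self]

theorem map_add_smul_apply_self [Fintype ι] (v : ι → M) (i : ι) (c : ι → R) (hc : c i = 0) :
    g (fun j => v j + c j • v i) = g v := by
  suffices ∀ s : Finset ι, g (fun j => if j ∈ s then v j + c j • v i else v j) = g v by
    simpa using this Finset.univ
  intro s
  induction s using Finset.induction_on with
  | empty => simp
  | @insert a s ha ih =>
    set w : ι → M := fun j => if j ∈ s then v j + c j • v i else v j
    by_cases hai : i = a
    · subst hai
      rw [← ih]
      congr 1
      ext j
      by_cases hj : j = i <;> simp [w, hj, hc]
    · have hwi : w i = v i := by simp [w, hc]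
      have hwa : w a = v a := by simp [w, ha]
      rw [← ih, ← g.map_update_add_smul_self w hai (c a), hwi, hwa]
      congr 1
      ext j
      by_cases hj : j = a <;> simp [w, hj]

end AlternatingMap

theorem AlternatingMap.exists_map_eq_with_functional_zero_off {K M N ι : Type*} [Field K]
    [AddCommGroup M] [Module K M] [AddCommGroup N] [Module K N] [Fintype ι] [DecidableEq ι]
    [Nonempty ι] (g : M [⋀^ι]→ₗ[K] N) (ν : M →ₗ[K] K) (p : Submodule K M) (v : ι → M)
    (hv : ∀ i, v i ∈ p) :
    ∃ i₀ w, (∀ i, w i ∈ p) ∧ (∀ i ≠ i₀, ν (w i) = 0) ∧ g w = g v := by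
  by_cases hker : ∀ i, ν (v i) = 0
  · exact ⟨Classical.arbitrary ι, v, hv, fun i _ => hker i, rfl⟩
  push Not at hker
  obtain ⟨i₀, hi₀⟩ := hker
  let c : ι → K := fun j => if j = i₀ then 0 else -(ν (v j) / ν (v i₀))
  refine ⟨i₀, fun j => v j + c j • v i₀, fun j => p.add_mem (hv j) (p.smul_mem _ (hv i₀)),
    fun j hj => ?_, g.map_add_smul_apply_self v i₀ c (if_pos rfl)⟩
  simp [c, hj, div_mul_cancel₀ _ hi₀]

theorem IsResMap.apply_wedge_of_forall_ne {M M' : Type*} [AddCommGroup M] [Module ℚ M]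
    [AddCommGroup M'] [Module ℚ M'] {n : ℕ} {ν : M →ₗ[ℚ] ℚ} {φ : M →ₗ[ℚ] M'}
    {R : (⋀[ℚ]^(n + 1) M) →ₗ[ℚ] (⋀[ℚ]^n M')} (hR : IsResMap n ν φ R) (f : Fin (n + 1) → M)
    (i₀ : Fin (n + 1)) (hf : ∀ i ≠ i₀, ν (f i) = 0) :
    R (wedge (n + 1) f) =
      ((-1 : ℚ) ^ (i₀ : ℕ) * ν (f i₀)) • wedge n (fun j => φ (f (i₀.succAbove j))) := by
  rw [hR f, Finset.sum_eq_single i₀ (fun i _ hi => by rw [hf i hi, mul_zero, zero_smul])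
    (by simp)]

/-- if every `f ∈ M₀` with `ν f = 0` satisfies `φ f ∈ M₀'`, then the residue
map `Res_{ν,φ}` maps the subspace of `⋀^{n+1} M` spanned by wedges of elements of `M₀` into
the subspace of `⋀^n M'` spanned by wedges of elements of `M₀'`. -/
theorem statement_1 {M M' : Type*} [AddCommGroup M] [Module ℚ M]
    [AddCommGroup M'] [Module ℚ M']
    (ν : M →ₗ[ℚ] ℚ) (φ : M →ₗ[ℚ] M') (n : ℕ)
    (R : (⋀[ℚ]^(n + 1) M) →ₗ[ℚ] (⋀[ℚ]^n M')) (hR : IsResMap n ν φ R)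
    (M₀ : Submodule ℚ M) (M₀' : Submodule ℚ M')
    (h : ∀ f ∈ M₀, ν f = 0 → φ f ∈ M₀') :
    ∀ ω ∈ Submodule.span ℚ
        {x : ⋀[ℚ]^(n + 1) M | ∃ f : Fin (n + 1) → M,
          (∀ i, f i ∈ M₀) ∧ x = wedge (n + 1) f},
      R ω ∈ Submodule.span ℚ
        {y : ⋀[ℚ]^n M' | ∃ g : Fin n → M',
          (∀ j, g j ∈ M₀') ∧ y = wedge n g} := by
  intro ω hω
  refine Submodule.mem_comap.mp (Submodule.span_le.mpr ?_ hω)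
  rintro _ ⟨f, hf, rfl⟩
  obtain ⟨i₀, w, hwM₀, hwker, hwf⟩ :=
    (ιMulti ℚ (n + 1)).exists_map_eq_with_functional_zero_off ν M₀ f hf
  have hwedge : wedge (n + 1) f = wedge (n + 1) w := Subtype.ext hwf.symm
  rw [SetLike.mem_coe, Submodule.mem_comap, hwedge, hR.apply_wedge_of_forall_ne w i₀ hwker]
  exact Submodule.smul_mem _ _ <| Submodule.subset_span
    ⟨_, fun j => h _ (hwM₀ _) (hwker _ (Fin.succAbove_ne i₀ j)), rfl⟩
end

section
/- Let M and M' be ℚ-vector spaces, ν : M → ℚ a ℚ-linear functional, φ : M → M' a ℚ-linear map, and q ≥ 1. Let w ∈ M' and define φ' : M → M' by φ'(f) = φ(f) + ν(f)·w. Then Res_{ν,φ'} = Res_{ν,φ} as ℚ-linear maps ⋀^q M → ⋀^{q−1} M'. -/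
/-!
`Res_{ν,φ}` depends only on the restriction of `φ` to `ker ν`, on which `φ + ν(·)·w` agrees
with `φ`. Indeed, `⋀^q M` is spanned by wedges of vectors from `ker ν ∪ {e}`. Such a wedge with
two entries outside `ker ν` repeats `e` and vanishes; in one with at most one entry `f i` outside
`ker ν`, the only term of the residue that can survive is the `i`-th, and it applies `φ` to
vectors of `ker ν` only.
-/

open ExteriorAlgebra

theorem LinearMap.exists_span_insert_ker_eq_top {K M : Type*} [Field K] [AddCommGroup M]
    [Module K M] (ν : M →ₗ[K] K) :
    ∃ e : M, Submodule.span K (insert e (LinearMap.ker ν : Set M)) = ⊤ := by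
  by_cases hν : ν = 0
  · exact ⟨0, by simp [hν]⟩
  · obtain ⟨e, he⟩ : ∃ e, ν e ≠ 0 := by simpa [LinearMap.ext_iff] using hν
    exact ⟨e, by rw [Submodule.span_insert, Submodule.span_eq, ν.span_singleton_sup_ker_eq_top he]⟩

namespace IsResMap

variable {M M' : Type*} [AddCommGroup M] [Module ℚ M] [AddCommGroup M'] [Module ℚ M']
  {n : ℕ} {ν : M →ₗ[ℚ] ℚ} {φ ψ : M →ₗ[ℚ] M'} {R R' : (⋀[ℚ]^(n + 1) M) →ₗ[ℚ] (⋀[ℚ]^n M')}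

theorem apply_wedge_eq_of_eqOn_ker (hR : IsResMap n ν φ R) (hR' : IsResMap n ν ψ R')
    (hφψ : ∀ x, ν x = 0 → ψ x = φ x) (f : Fin (n + 1) → M)
    (hf : ∀ i k, i ≠ k → ν (f i) = 0 ∨ ν (f k) = 0) :
    R' (wedge (n + 1) f) = R (wedge (n + 1) f) := by
  rw [hR f, hR' f]
  refine Finset.sum_congr rfl fun i _ => ?_
  by_cases hi : ν (f i) = 0
  · simp [hi]
  · congr 2
    funext j
    exact hφψ _ ((hf _ _ (Fin.succAbove_ne i j)).resolve_right hi)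

theorem eq_of_eqOn_ker (hR : IsResMap n ν φ R) (hR' : IsResMap n ν ψ R')
    (hφψ : ∀ x, ν x = 0 → ψ x = φ x) : R' = R := by
  obtain ⟨e, he⟩ := ν.exists_span_insert_ker_eq_top
  refine LinearMap.ext_on (exteriorPower.ιMulti_span_of_span ℚ (n + 1) M he) ?_
  rintro _ ⟨f, hf, rfl⟩
  by_cases hgood : ∀ i k, i ≠ k → ν (f i) = 0 ∨ ν (f k) = 0
  · exact hR.apply_wedge_eq_of_eqOn_ker hR' hφψ f hgood
  · push Not at hgood
    obtain ⟨i, k, hik, hi, hk⟩ := hgood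
    have hfi : f i = e := (hf ⟨i, rfl⟩).resolve_right hi
    have hfk : f k = e := (hf ⟨k, rfl⟩).resolve_right hk
    rw [(exteriorPower.ιMulti ℚ (n + 1)).map_eq_zero_of_eq f (hfi.trans hfk.symm) hik,
      map_zero, map_zero]

end IsResMap

/-- replacing `φ` by `φ' = φ + ν(·)·w` does not change the residue map:
`Res_{ν,φ'} = Res_{ν,φ}` as linear maps `⋀^{n+1} M → ⋀^n M'`. -/
theorem statement_2 {M M' : Type*} [AddCommGroup M] [Module ℚ M]
    [AddCommGroup M'] [Module ℚ M']
    (ν : M →ₗ[ℚ] ℚ) (φ : M →ₗ[ℚ] M') (n : ℕ) (w : M')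
    (R R' : (⋀[ℚ]^(n + 1) M) →ₗ[ℚ] (⋀[ℚ]^n M'))
    (hR : IsResMap n ν φ R)
    (hR' : IsResMap n ν (φ + ν.smulRight w) R') :
    R' = R :=
  hR.eq_of_eqOn_ker hR' fun x hx => by simp [hx]
end

section
/- Let M, M', M'' be ℚ-vector spaces, ν : M → ℚ and ν' : M' → ℚ ℚ-linear functionals, φ : M → M' and φ' : M' → M'' ℚ-linear maps, and q ≥ 2. Then for all f₁, …, f_q ∈ M, Res_{ν',φ'}(Res_{ν,φ}(f₁ ∧ ⋯ ∧ f_q)) = Σ_{1 ≤ j < i ≤ q} (−1)^{i+j} (ν(f_i)·ν'(φ(f_j)) − ν(f_j)·ν'(φ(f_i))) · (φ'∘φ)(f₁) ∧ ⋯ ∧ (φ'∘φ)(f_q), where in the wedge on the right the factors (φ'∘φ)(f_j) and (φ'∘φ)(f_i) are omitted (for q = 2 the right-hand side is the scalar −(ν(f₂)ν'(φ(f₁)) − ν(f₁)ν'(φ(f₂))), an element of ⋀^0 M'' = ℚ). -/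
open ExteriorAlgebra

lemma sa_val {n : ℕ} (i : Fin (n+1)) (k : Fin n) :
    ((i.succAbove k : Fin (n+1)) : ℕ) = if (k:ℕ) < (i:ℕ) then (k:ℕ) else (k:ℕ)+1 := by
  simp only [Fin.succAbove, Fin.lt_def, Fin.coe_castSucc, apply_ite Fin.val, Fin.val_succ]

lemma sa_sa {n : ℕ} (i : Fin (n+2)) (k : Fin (n+1)) (h : (i:ℕ) ≤ (k:ℕ)) (hi : (i:ℕ) < n+1)
    (l : Fin n) :
    i.succAbove (k.succAbove l) = (k.succ).succAbove ((⟨(i:ℕ), hi⟩ : Fin (n+1)).succAbove l) := by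
  ext
  simp only [sa_val, Fin.val_succ]
  split_ifs <;> omega

def toF1 {n : ℕ} (j : Fin (n+2)) : Fin (n+1) :=
  if h : (j:ℕ) < n+1 then ⟨(j:ℕ), h⟩ else 0

lemma mk_eq_toF1 {n : ℕ} (j : Fin (n+2)) (p : (j:ℕ) < n+1) :
    (⟨(j:ℕ), p⟩ : Fin (n+1)) = toF1 j := (dif_pos p).symm

/-- composition formula for two residue maps, `q = n + 2 ≥ 2`.
For `f₁, …, f_q ∈ M` (zero-based indexing `f : Fin (n+2) → M`),
`Res_{ν',φ'}(Res_{ν,φ}(f₁ ∧ ⋯ ∧ f_q)) =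
  Σ_{j < i} (−1)^{i+j} (ν(f_i)ν'(φ(f_j)) − ν(f_j)ν'(φ(f_i))) · (φ'∘φ)(f₁) ∧ ⋯ (omit i,j) ⋯`. -/
theorem statement_3 {M M' M'' : Type*} [AddCommGroup M] [Module ℚ M]
    [AddCommGroup M'] [Module ℚ M'] [AddCommGroup M''] [Module ℚ M'']
    (ν : M →ₗ[ℚ] ℚ) (ν' : M' →ₗ[ℚ] ℚ)
    (φ : M →ₗ[ℚ] M') (φ' : M' →ₗ[ℚ] M'') (n : ℕ)
    (R : (⋀[ℚ]^(n + 2) M) →ₗ[ℚ] (⋀[ℚ]^(n + 1) M'))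
    (R' : (⋀[ℚ]^(n + 1) M') →ₗ[ℚ] (⋀[ℚ]^n M''))
    (hR : IsResMap (n + 1) ν φ R) (hR' : IsResMap n ν' φ' R') :
    ∀ f : Fin (n + 2) → M,
      R' (R (wedge (n + 2) f)) =
        ∑ i : Fin (n + 2), ∑ j : Fin (n + 2),
          if h : (j : ℕ) < (i : ℕ) then
            ((-1 : ℚ) ^ ((i : ℕ) + (j : ℕ)) *
              (ν (f i) * ν' (φ (f j)) - ν (f j) * ν' (φ (f i)))) •
              wedge n (fun k =>
                φ' (φ (f (i.succAbove ((⟨(j : ℕ), by omega⟩ : Fin (n + 1)).succAbove k)))))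
          else 0 := by
  simp only [IsResMap] at hR hR'
  intro f
  rw [hR f, map_sum]
  simp only [LinearMap.map_smul, hR', Finset.smul_sum, smul_smul]
  simp only [mk_eq_toF1, dite_eq_ite]
  rw [← Finset.sum_product', ← Finset.sum_product', ← Finset.sum_filter]
  rw [← Finset.sum_filter_add_sum_filter_not (Finset.univ ×ˢ Finset.univ)
    (fun p : Fin (n+2) × Fin (n+1) => ((p.2 : ℕ) < (p.1 : ℕ)))]
  simp only [mul_sub]
  have hsub : ∀ (c d : ℚ) (w : ↥(⋀[ℚ]^n M'')), (c - d) • w = c • w - d • w :=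
    fun c d w => sub_smul c d w
  simp only [hsub]
  rw [Finset.sum_sub_distrib]
  rw [sub_eq_add_neg, ← Finset.sum_neg_distrib]
  congr 1
  · refine Finset.sum_nbij' (fun p => (p.1, Fin.castSucc p.2)) (fun p => (p.1, toF1 p.2))
      ?_ ?_ ?_ ?_ ?_
    · rintro ⟨i, k⟩ hm
      simp only [Finset.mem_filter, Finset.mem_product, Finset.mem_univ, true_and] at hm ⊢
      simpa using hm
    · rintro ⟨i, j⟩ hm
      simp only [Finset.mem_filter, Finset.mem_product, Finset.mem_univ, true_and] at hm ⊢
      have hj : (j:ℕ) < n+1 := by omega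
      simp only [toF1, dif_pos hj]
      exact hm
    · rintro ⟨i, k⟩ hm
      simp only [Finset.mem_filter, Finset.mem_product, Finset.mem_univ, true_and] at hm
      have hk : ((Fin.castSucc k : Fin (n+2)) : ℕ) < n+1 := by have := k.isLt; simp; omega
      simp only [toF1, dif_pos hk, Prod.mk.injEq]
      exact ⟨by first | trivial | rfl, by first | trivial | (ext; simp)⟩
    · rintro ⟨i, j⟩ hm
      simp only [Finset.mem_filter, Finset.mem_product, Finset.mem_univ, true_and] at hm
      have hj : (j:ℕ) < n+1 := by omega
      simp only [toF1, dif_pos hj, Prod.mk.injEq]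
      exact ⟨by first | trivial | rfl, by first | trivial | (ext; simp)⟩
    · rintro ⟨i, k⟩ hm
      simp only [Finset.mem_filter, Finset.mem_product, Finset.mem_univ, true_and] at hm
      have hki : (k:ℕ) < (i:ℕ) := hm
      have h1 : i.succAbove k = Fin.castSucc k := by
        ext; rw [sa_val]; simp [hki]
      have h2 : toF1 (Fin.castSucc k : Fin (n+2)) = k := by
        have hk : ((Fin.castSucc k : Fin (n+2)) : ℕ) < n+1 := by have := k.isLt; simp; omega
        simp only [toF1, dif_pos hk]
        ext; simp
      rw [h1]
      simp only [h2, Fin.coe_castSucc]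
      congr 1
      rw [pow_add]
      ring
  · refine Finset.sum_nbij' (fun p => (Fin.succ p.2, p.1))
      (fun p => (p.2, ⟨(p.1 : ℕ) - 1, by omega⟩)) ?_ ?_ ?_ ?_ ?_
    · rintro ⟨i, k⟩ hm
      simp only [Finset.mem_filter, Finset.mem_product, Finset.mem_univ, true_and] at hm ⊢
      simp only [Fin.val_succ]
      omega
    · rintro ⟨i, j⟩ hm
      simp only [Finset.mem_filter, Finset.mem_product, Finset.mem_univ, true_and] at hm ⊢
      simp only [not_lt]
      omega
    · rintro ⟨i, k⟩ hm
      simp only [Finset.mem_filter, Finset.mem_product, Finset.mem_univ, true_and] at hm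
      simp only [Prod.mk.injEq]
      exact ⟨by first | trivial | rfl, by first | trivial | (ext; simp)⟩
    · rintro ⟨i, j⟩ hm
      simp only [Finset.mem_filter, Finset.mem_product, Finset.mem_univ, true_and] at hm
      simp only [Prod.mk.injEq]
      refine ⟨by ext; simp; omega, by first | trivial | rfl⟩
    · rintro ⟨i, k⟩ hm
      simp only [Finset.mem_filter, Finset.mem_product, Finset.mem_univ, true_and, not_lt] at hm
      have hik : (i:ℕ) ≤ (k:ℕ) := hm
      have hi : (i:ℕ) < n+1 := by omega
      have h1 : i.succAbove k = Fin.succ k := by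
        ext; rw [sa_val]; simp [Nat.not_lt.2 hik]
      have h2 : toF1 i = ⟨(i:ℕ), hi⟩ := dif_pos hi
      have h3 : (fun l : Fin n => φ' (φ (f (i.succAbove (k.succAbove l))))) =
          fun l => φ' (φ (f ((Fin.succ k).succAbove
            ((⟨(i:ℕ), hi⟩ : Fin (n+1)).succAbove l)))) :=
        funext fun l => by rw [sa_sa i k hik hi l]
      have hneg : ∀ (c : ℚ) (w : ↥(⋀[ℚ]^n M'')), -(c • w) = (-c) • w :=
        fun c w => (neg_smul c w).symm
      rw [h1, h3, h2, hneg]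
      congr 1
      simp only [Fin.val_succ]
      rw [pow_add, pow_succ]
      ring
end

section
/- Let M and M'' be ℚ-vector spaces, let A be a finite index set, and for each α ∈ A let M'_α be a ℚ-vector space, ν_α : M → ℚ and ν'_α : M'_α → ℚ ℚ-linear functionals, and φ_α : M → M'_α and φ'_α : M'_α → M'' ℚ-linear maps. Assume (i) the composite φ'_α ∘ φ_α : M → M'' is a single map Φ independent of α, and (ii) for all f, g ∈ M, Σ_{α ∈ A} (ν_α(f)·ν'_α(φ_α(g)) − ν_α(g)·ν'_α(φ_α(f))) = 0. Then for every q ≥ 2, Σ_{α ∈ A} Res_{ν'_α,φ'_α} ∘ Res_{ν_α,φ_α} = 0 as a ℚ-linear map ⋀^q M → ⋀^{q−2} M''. -/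
open ExteriorAlgebra

/-!
Expanding both residues, `Σ_α Res_{ν'_α,φ'_α} (Res_{ν_α,φ_α} (f₀ ∧ ⋯ ∧ f_{q-1}))` is the double
alternatization `Σ_{i,j} ± β(f_i, f_j) · Φ(f₀) ∧ ⋯ (f_i, f_j omitted) ⋯` of the bilinear map
`(x, y) ↦ β(x, y) · (Φ ∧ ⋯ ∧ Φ)`, where `β(x, y) = Σ_α ν_α(x) ν'_α(φ_α(y))`; hypothesis (i) makes
the wedge factor independent of `α`. Hypothesis (ii) says exactly that `β` is symmetric, and the
double alternatization of a symmetric bilinear map vanishes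
(`AlternatingMap.alternatizeUncurryFin_alternatizeUncurryFinLM_comp_of_symmetric`).
-/

open AlternatingMap

lemma LinearMap.sum_compr₂ {R M N P Q ι : Type*} [CommSemiring R] [AddCommMonoid M] [Module R M]
    [AddCommMonoid N] [Module R N] [AddCommMonoid P] [Module R P] [AddCommMonoid Q] [Module R Q]
    (s : Finset ι) (β : ι → M →ₗ[R] N →ₗ[R] P) (g : P →ₗ[R] Q) :
    (∑ i ∈ s, β i).compr₂ g = ∑ i ∈ s, (β i).compr₂ g := by
  ext x y
  simp [LinearMap.sum_apply]

section Bilinear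

variable {R M M' N ι : Type*} [CommRing R] [AddCommGroup M] [Module R M]
  [AddCommGroup M'] [Module R M'] [AddCommGroup N] [Module R N]

def residuePairing (ν : M →ₗ[R] R) (ν' : M' →ₗ[R] R) (φ : M →ₗ[R] M') : M →ₗ[R] M →ₗ[R] R :=
  (LinearMap.mul R R).compl₁₂ ν (ν' ∘ₗ φ)

@[simp]
lemma residuePairing_apply (ν : M →ₗ[R] R) (ν' : M' →ₗ[R] R) (φ : M →ₗ[R] M') (x y : M) :
    residuePairing ν ν' φ x y = ν x * ν' (φ y) :=
  rfl

lemma alternatizeUncurryFin_comp_sum_apply {n : ℕ} (s : Finset ι)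
    (f : ι → M →ₗ[R] M →ₗ[R] M [⋀^Fin n]→ₗ[R] N) (v : Fin (n + 2) → M) :
    alternatizeUncurryFin (alternatizeUncurryFinLM ∘ₗ ∑ i ∈ s, f i) v =
      ∑ i ∈ s, alternatizeUncurryFin (alternatizeUncurryFinLM ∘ₗ f i) v := by
  rw [← LinearMap.compRight_apply R, map_sum, ← alternatizeUncurryFinLM_apply, map_sum,
    ← coe_multilinearMap, ← toMultilinearMapLM_apply (S := R), map_sum, sum_apply]
  rfl

lemma alternatizeUncurryFin_compr₂_toSpanSingleton_of_symmetric {n : ℕ}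
    {β : M →ₗ[R] M →ₗ[R] R} (hβ : ∀ x y, β x y = β y x) (ω : M [⋀^Fin n]→ₗ[R] N) :
    alternatizeUncurryFin (alternatizeUncurryFinLM ∘ₗ β.compr₂ (LinearMap.toSpanSingleton R _ ω)) =
      0 :=
  alternatizeUncurryFin_alternatizeUncurryFinLM_comp_of_symmetric fun x y => by simp [hβ x y]

end Bilinear

section Residue

variable {M M' N : Type*} [AddCommGroup M] [Module ℚ M] [AddCommGroup M'] [Module ℚ M']
  [AddCommGroup N] [Module ℚ N]

lemma IsResMap.map_ιMulti {n : ℕ} {ν : M →ₗ[ℚ] ℚ} {φ : M →ₗ[ℚ] M'}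
    {R : ⋀[ℚ]^(n + 1) M →ₗ[ℚ] ⋀[ℚ]^n M'} (hR : IsResMap n ν φ R) (v : Fin (n + 1) → M) :
    R (exteriorPower.ιMulti ℚ _ v) =
      ∑ i : Fin (n + 1), ((-1 : ℚ) ^ (i : ℕ) * ν (v i)) •
        exteriorPower.ιMulti ℚ n (φ ∘ i.removeNth v) :=
  hR v

lemma IsResMap.comp_apply_ιMulti {n : ℕ} {ν : M →ₗ[ℚ] ℚ} {ν' : M' →ₗ[ℚ] ℚ} {φ : M →ₗ[ℚ] M'}
    {φ' : M' →ₗ[ℚ] N} {R : ⋀[ℚ]^(n + 2) M →ₗ[ℚ] ⋀[ℚ]^(n + 1) M'}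
    {R' : ⋀[ℚ]^(n + 1) M' →ₗ[ℚ] ⋀[ℚ]^n N}
    (hR : IsResMap (n + 1) ν φ R) (hR' : IsResMap n ν' φ' R') (v : Fin (n + 2) → M) :
    R' (R (exteriorPower.ιMulti ℚ _ v)) =
      alternatizeUncurryFin (alternatizeUncurryFinLM ∘ₗ (residuePairing ν ν' φ).compr₂
        (LinearMap.toSpanSingleton ℚ _ ((exteriorPower.ιMulti ℚ n).compLinearMap (φ' ∘ₗ φ)))) v := by
  rw [hR.map_ιMulti, map_sum, alternatizeUncurryFin_apply]
  refine Finset.sum_congr rfl fun i _ => ?_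
  rw [map_smul, hR'.map_ιMulti, LinearMap.comp_apply, alternatizeUncurryFinLM_apply,
    alternatizeUncurryFin_apply, Finset.smul_sum, Finset.smul_sum]
  refine Finset.sum_congr rfl fun j _ => ?_
  simp only [LinearMap.compr₂_apply, residuePairing_apply, LinearMap.toSpanSingleton_apply]
  rw [AlternatingMap.smul_apply, AlternatingMap.compLinearMap_apply, Function.comp_apply,
    show φ' ∘ j.removeNth (φ ∘ i.removeNth v) =
      fun l => (φ' ∘ₗ φ) (j.removeNth (i.removeNth v) l) from rfl]
  module

end Residue

/-- if all the composites `φ'_α ∘ φ_α` coincide with a single map `Φ`, and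
for all `f, g ∈ M` one has `Σ_α (ν_α(f)ν'_α(φ_α(g)) − ν_α(g)ν'_α(φ_α(f))) = 0`, then for
every `q = n + 2 ≥ 2` the sum of composed residue maps
`Σ_α Res_{ν'_α,φ'_α} ∘ Res_{ν_α,φ_α} : ⋀^q M → ⋀^{q−2} M''` vanishes. -/
theorem statement_4 {M M'' : Type*} [AddCommGroup M] [Module ℚ M]
    [AddCommGroup M''] [Module ℚ M'']
    {A : Type*} [Fintype A] (M' : A → Type*)
    [∀ α, AddCommGroup (M' α)] [∀ α, Module ℚ (M' α)]
    (ν : ∀ α, M →ₗ[ℚ] ℚ) (ν' : ∀ α, M' α →ₗ[ℚ] ℚ)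
    (φ : ∀ α, M →ₗ[ℚ] M' α) (φ' : ∀ α, M' α →ₗ[ℚ] M'')
    (Φ : M →ₗ[ℚ] M'') (hΦ : ∀ α, (φ' α) ∘ₗ (φ α) = Φ)
    (hsum : ∀ f g : M,
      ∑ α : A, (ν α f * ν' α (φ α g) - ν α g * ν' α (φ α f)) = 0)
    (n : ℕ)
    (R : ∀ α, (⋀[ℚ]^(n + 2) M) →ₗ[ℚ] (⋀[ℚ]^(n + 1) (M' α)))
    (R' : ∀ α, (⋀[ℚ]^(n + 1) (M' α)) →ₗ[ℚ] (⋀[ℚ]^n M''))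
    (hR : ∀ α, IsResMap (n + 1) (ν α) (φ α) (R α))
    (hR' : ∀ α, IsResMap n (ν' α) (φ' α) (R' α)) :
    ∑ α : A, (R' α) ∘ₗ (R α) = 0 := by
  set T := LinearMap.toSpanSingleton ℚ _ ((exteriorPower.ιMulti ℚ n).compLinearMap Φ)
  set β := ∑ α, residuePairing (ν α) (ν' α) (φ α)
  have hβ : ∀ x y, β x y = β y x := fun x y => by
    simpa [β, LinearMap.sum_apply, sub_eq_zero] using hsum x y
  refine exteriorPower.linearMap_ext (AlternatingMap.ext fun v => ?_)
  calc (∑ α, R' α ∘ₗ R α) (exteriorPower.ιMulti ℚ _ v)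
      = ∑ α, alternatizeUncurryFin
          (alternatizeUncurryFinLM ∘ₗ (residuePairing (ν α) (ν' α) (φ α)).compr₂ T) v := by
        simp only [LinearMap.sum_apply, LinearMap.comp_apply, (hR _).comp_apply_ιMulti (hR' _), hΦ,
          T]
    _ = alternatizeUncurryFin (alternatizeUncurryFinLM ∘ₗ β.compr₂ T) v := by
        rw [← alternatizeUncurryFin_comp_sum_apply, ← LinearMap.sum_compr₂]
    _ = 0 := by
        rw [alternatizeUncurryFin_compr₂_toSpanSingleton_of_symmetric hβ, AlternatingMap.zero_apply]
end

section
/- Let A be a discrete valuation ring with fraction field F and residue field k, let v : F^× → ℤ be the normalized discrete valuation, and let q ≥ 1. Then for any two uniformizers π and π' of A, the rational exterior-power tame symbols coincide: ∂_π = ∂_{π'} as ℚ-linear maps ⋀^q (F^× ⊗_ℤ ℚ) → ⋀^{q−1} (k^× ⊗_ℤ ℚ). -/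
open scoped TensorProduct

/-- The canonical map `B → B ⊗_ℤ ℚ` from a multiplicative abelian group `B` to its
rationalization, realized as `b ↦ 1 ⊗ b : ℚ ⊗[ℤ] Additive B`. -/
noncomputable def ratUnit {B : Type*} [CommGroup B] (b : B) : ℚ ⊗[ℤ] Additive B :=
  (1 : ℚ) ⊗ₜ[ℤ] Additive.ofMul b

/-- `D` is the rational exterior-power tame symbol
`∂ : ⋀^{n+1}(F^×_ℚ) → ⋀^n(k^×_ℚ)` associated to the data of a valuation `v : F^× → ℤ` and a
unit-part map `ubar : F^× → k^×`, iff it takes the defining values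
`∂(a₁ ∧ ⋯ ∧ a_q) = Σᵢ (−1)^{i−1} v(aᵢ) · ū_{a₁} ∧ ⋯ (omit i) ⋯ ∧ ū_{a_q}` on wedges of
elements coming from `F^×`. -/
def IsTameSymbol {F k : Type*} [Field F] [Field k] (n : ℕ)
    (v : Fˣ → ℤ) (ubar : Fˣ → kˣ)
    (D : (⋀[ℚ]^(n + 1) (ℚ ⊗[ℤ] Additive Fˣ)) →ₗ[ℚ] (⋀[ℚ]^n (ℚ ⊗[ℤ] Additive kˣ))) : Prop :=
  ∀ a : Fin (n + 1) → Fˣ,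
    D (wedge (n + 1) (fun i => ratUnit (a i))) =
      ∑ i : Fin (n + 1), ((-1 : ℚ) ^ (i : ℕ) * (v (a i) : ℚ)) •
        wedge n (fun j => ratUnit (ubar (a (i.succAbove j))))

namespace ExteriorAlgebra

variable {R M : Type*} [CommRing R] [AddCommGroup M] [Module R M]

theorem contractLeft_ιMulti (φ : Module.Dual R M) {n : ℕ} (x : Fin (n + 1) → M) :
    CliffordAlgebra.contractLeft φ (ιMulti R (n + 1) x) =
      ∑ i : Fin (n + 1), ((-1 : R) ^ (i : ℕ) * φ (x i)) • ιMulti R n (x ∘ i.succAbove) := by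
  induction n with
  | zero =>
    rw [ιMulti_succ_apply, ιMulti_zero_apply, CliffordAlgebra.contractLeft_ι_mul]
    simp
  | succ n ih =>
    rw [ιMulti_succ_apply, CliffordAlgebra.contractLeft_ι_mul, ih, Fin.sum_univ_succ (n := n + 1),
      Finset.mul_sum, sub_eq_add_neg, ← Finset.sum_neg_distrib]
    congr 1
    · simp [Matrix.vecTail, Function.comp_def, Fin.succAbove_zero]
    refine Finset.sum_congr rfl fun i _ => ?_
    rw [ιMulti_succ_apply]
    simp [Matrix.vecTail, Function.comp_def, Fin.succ_succAbove_succ, pow_succ, ← neg_smul]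

theorem ιMulti_add_apply_smul (φ : Module.Dual R M) (y : M) {n : ℕ} (x : Fin n → M) :
    ιMulti R n (fun i => x i + φ (x i) • y) =
      ιMulti R n x + ι R y * CliffordAlgebra.contractLeft φ (ιMulti R n x) := by
  induction n with
  | zero => simp [ιMulti_zero_apply]
  | succ n ih =>
    rw [ιMulti_succ_apply, ιMulti_succ_apply (v := x)]
    have htail : Matrix.vecTail (fun i => x i + φ (x i) • y) =
        fun i => Matrix.vecTail x i + φ (Matrix.vecTail x i) • y := rfl
    rw [htail, ih, CliffordAlgebra.contractLeft_ι_mul]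
    set C := CliffordAlgebra.contractLeft φ (ιMulti R n (Matrix.vecTail x))
    have hanti : ι R (x 0) * (ι R y * C) = -(ι R y * (ι R (x 0) * C)) := by
      rw [← mul_assoc, ← mul_assoc, ← neg_mul, ← neg_eq_iff_add_eq_zero.mpr (ι_add_mul_swap _ _)]
    have hyy : ι R y * (ι R y * C) = 0 := by rw [← mul_assoc, ι_sq_zero, zero_mul]
    simp only [map_add, map_smul, add_mul, mul_add, smul_mul_assoc, mul_smul_comm, hanti, hyy,
      mul_sub, smul_zero]
    abel

theorem sum_smul_ιMulti_succAbove_add_smul {n : ℕ} (c : Fin (n + 1) → R) (e : Fin (n + 1) → M)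
    (w : M) :
    ∑ i : Fin (n + 1), ((-1 : R) ^ (i : ℕ) * c i) •
        ιMulti R n (fun j => e (i.succAbove j) + c (i.succAbove j) • w) =
      ∑ i : Fin (n + 1), ((-1 : R) ^ (i : ℕ) * c i) • ιMulti R n (fun j => e (i.succAbove j)) := by
  -- Both sides are `snd` of `fst ⌋ (x₀ ∧ ⋯ ∧ xₙ)`, before and after shearing the `xᵢ` along
  -- `(0, w)`. The shear adds `(0, w) ∧ (fst ⌋ ·)`, which `fst ⌋ ·` kills since `fst (0, w) = 0`
  -- and `fst ⌋ fst ⌋ · = 0`.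
  let φ : Module.Dual R (R × M) := LinearMap.fst R R M
  let x : Fin (n + 1) → R × M := fun i => (c i, e i)
  have hcontr :
      CliffordAlgebra.contractLeft φ (ιMulti R (n + 1) fun i => x i + φ (x i) • (0, w)) =
        CliffordAlgebra.contractLeft φ (ιMulti R (n + 1) x) := by
    rw [ιMulti_add_apply_smul φ, map_add, CliffordAlgebra.contractLeft_ι_mul,
      CliffordAlgebra.contractLeft_contractLeft]
    simp [φ]
  rw [contractLeft_ιMulti, contractLeft_ιMulti] at hcontr
  simpa [φ, x, map_sum, map_smul, map_apply_ιMulti, Function.comp_def] using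
    congrArg (map (LinearMap.snd R R M)) hcontr

end ExteriorAlgebra

section Rationalization

variable {B : Type*} [CommGroup B]

theorem ratUnit_mul (a b : B) : ratUnit (a * b) = ratUnit a + ratUnit b := by
  rw [ratUnit, ratUnit, ratUnit, ofMul_mul, TensorProduct.tmul_add]

theorem ratUnit_zpow (a : B) (m : ℤ) : ratUnit (a ^ m) = (m : ℚ) • ratUnit a := by
  rw [ratUnit, ratUnit, ofMul_zpow, TensorProduct.tmul_smul, Int.cast_smul_eq_zsmul]

theorem span_range_ratUnit : Submodule.span ℚ (Set.range (ratUnit (B := B))) = ⊤ := by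
  have h := Submodule.baseChange_span (R := ℤ) (A := ℚ) (Set.univ : Set (Additive B))
  rw [Submodule.span_univ, Submodule.baseChange_top, Set.image_univ] at h
  exact h.symm

theorem linearMap_ext_wedge_ratUnit {N : Type*} [AddCommGroup N] [Module ℚ N] {q : ℕ}
    {f g : ⋀[ℚ]^q (ℚ ⊗[ℤ] Additive B) →ₗ[ℚ] N}
    (h : ∀ a : Fin q → B, f (wedge q fun i => ratUnit (a i)) = g (wedge q fun i => ratUnit (a i))) :
    f = g := by
  refine LinearMap.ext_on (exteriorPower.ιMulti_span_of_span ℚ q _ span_range_ratUnit) ?_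
  rintro - ⟨x, hx, rfl⟩
  choose a ha using fun i => hx ⟨i, rfl⟩
  obtain rfl : x = fun i => ratUnit (a i) := funext fun i => (ha i).symm
  exact h a

end Rationalization

theorem IsTameSymbol.eq_of_mul_zpow {F k : Type*} [Field F] [Field k] {n : ℕ} {v : Fˣ → ℤ}
    {ubar ubar' : Fˣ → kˣ}
    {D D' : (⋀[ℚ]^(n + 1) (ℚ ⊗[ℤ] Additive Fˣ)) →ₗ[ℚ] (⋀[ℚ]^n (ℚ ⊗[ℤ] Additive kˣ))}
    (hD : IsTameSymbol n v ubar D) (hD' : IsTameSymbol n v ubar' D') (w : kˣ)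
    (hw : ∀ a, ubar a = ubar' a * w ^ v a) : D = D' := by
  refine linearMap_ext_wedge_ratUnit fun a => ?_
  rw [hD, hD']
  simp only [hw, ratUnit_mul, ratUnit_zpow]
  apply Subtype.ext
  simp only [Submodule.coe_sum, SetLike.val_smul]
  exact ExteriorAlgebra.sum_smul_ιMulti_succAbove_add_smul (fun i => (v (a i) : ℚ))
      (fun i => ratUnit (ubar' (a i))) (ratUnit w)

theorem statement_10_general
    (A : Type*) [CommRing A] [IsDomain A] [IsDiscreteValuationRing A]
    (F : Type*) [Field F] [Algebra A F] [IsFractionRing A F]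
    -- the normalized discrete valuation of `A` on `F`, as a function on `Fˣ`
    (v : Fˣ → ℤ)
    -- two uniformizers `π`, `π'` of `A`, with images `πF`, `πF'` in `Fˣ`
    (πF πF' : Fˣ)
    (hvπ' : v πF' = 1)
    -- the unit-part maps associated to `π` and `π'`
    (U U' : Fˣ → Aˣ)
    (hU : ∀ a : Fˣ, (a : F) = algebraMap A F (U a : A) * (πF : F) ^ (v a))
    (hU' : ∀ a : Fˣ, (a : F) = algebraMap A F (U' a : A) * (πF' : F) ^ (v a))
    (n : ℕ)
    (D D' : (⋀[ℚ]^(n + 1) (ℚ ⊗[ℤ] Additive Fˣ)) →ₗ[ℚ]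
      (⋀[ℚ]^n (ℚ ⊗[ℤ] Additive (IsLocalRing.ResidueField A)ˣ)))
    (hD : IsTameSymbol n v
      (fun a => Units.map (IsLocalRing.residue A).toMonoidHom (U a)) D)
    (hD' : IsTameSymbol n v
      (fun a => Units.map (IsLocalRing.residue A).toMonoidHom (U' a)) D') :
    D = D' := by
  let incl : Aˣ →* Fˣ := Units.map (algebraMap A F : A →* F)
  have hincl : Function.Injective incl := Units.map_injective (IsFractionRing.injective A F)
  have hdecomp : ∀ (P : Fˣ) (V : Fˣ → Aˣ),
      (∀ a : Fˣ, (a : F) = algebraMap A F (V a : A) * (P : F) ^ v a) →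
        ∀ a, a = incl (V a) * P ^ v a :=
    fun P V h a => Units.ext (by simpa [incl] using h a)
  set w := U πF'
  have hπF'w : πF' = incl w * πF := by simpa [hvπ'] using hdecomp _ _ hU πF'
  have hUU' : ∀ a, U a = U' a * w ^ v a := by
    intro a
    apply hincl
    have h := (hdecomp _ _ hU a).symm.trans (hdecomp _ _ hU' a)
    rw [hπF'w, mul_zpow, ← mul_assoc] at h
    simpa using mul_right_cancel h
  exact hD.eq_of_mul_zpow hD' (Units.map _ w) fun a => by rw [hUU', map_mul, map_zpow]

/-- for a discrete valuation ring `A` with fraction field `F` and residue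
field `k`, normalized valuation `v`, and any two uniformizers `π`, `π'` of `A` (with
associated unit-part decompositions `a = u_a·π^{v(a)}`, resp. `a = u'_a·π'^{v(a)}`), the
rational exterior-power tame symbols associated to `π` and to `π'` coincide:
`∂_π = ∂_{π'}` as `ℚ`-linear maps `⋀^q(F^×_ℚ) → ⋀^{q−1}(k^×_ℚ)` (here `q = n + 1 ≥ 1`). -/
theorem statement_10
    (A : Type*) [CommRing A] [IsDomain A] [IsDiscreteValuationRing A]
    (F : Type*) [Field F] [Algebra A F] [IsFractionRing A F]
    -- the normalized discrete valuation of `A` on `F`, as a function on `Fˣ`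
    (v : Fˣ → ℤ)
    (hv_mul : ∀ a b : Fˣ, v (a * b) = v a + v b)
    (hv_unit : ∀ a : Fˣ, v a = 0 ↔ ∃ w : Aˣ, algebraMap A F (w : A) = (a : F))
    -- two uniformizers `π`, `π'` of `A`, with images `πF`, `πF'` in `Fˣ`
    (π π' : A) (hπ : Irreducible π) (hπ' : Irreducible π')
    (πF πF' : Fˣ) (hπF : (πF : F) = algebraMap A F π) (hπF' : (πF' : F) = algebraMap A F π')
    (hvπ : v πF = 1) (hvπ' : v πF' = 1)
    -- the unit-part maps associated to `π` and `π'`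
    (U U' : Fˣ → Aˣ)
    (hU : ∀ a : Fˣ, (a : F) = algebraMap A F (U a : A) * (πF : F) ^ (v a))
    (hU' : ∀ a : Fˣ, (a : F) = algebraMap A F (U' a : A) * (πF' : F) ^ (v a))
    (n : ℕ)
    (D D' : (⋀[ℚ]^(n + 1) (ℚ ⊗[ℤ] Additive Fˣ)) →ₗ[ℚ]
      (⋀[ℚ]^n (ℚ ⊗[ℤ] Additive (IsLocalRing.ResidueField A)ˣ)))
    (hD : IsTameSymbol n v
      (fun a => Units.map (IsLocalRing.residue A).toMonoidHom (U a)) D)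
    (hD' : IsTameSymbol n v
      (fun a => Units.map (IsLocalRing.residue A).toMonoidHom (U' a)) D') :
    D = D' :=
  statement_10_general A F v πF πF' hvπ' U U' hU hU' n D D' hD hD'
end
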